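/- (Potential decrease for accelerated proximal gradient) Let f be convex and L-smooth, g proper closed convex, φ = f+g with minimizer x*. Let B_k > 0 be strictly increasing, b_0 = B_0, b_k = B_k − B_{k−1}, and a_k ≥ 0 with a_k ≤ (B_k − b_k²)/(2L) for k ≥ 1. Given x^0 = v^0, define for k ≥ 1: y^{k−1} = x^{k−1} − (1/L)G(x^{k−1}), v^k = v^{k−1} − (b_{k−1}/L)G(x^{k−1}), x^k = (B_{k−1}/B_k)y^{k−1} + (b_k/B_k)v^k, where G(·) := G(·, 1/L). Then the potential C_k := Σ_{i=0}^k a_i‖G(x^i)‖² + B_k(φ(y^k) − φ(x*)) satisfies C_k − C_{k−1} ≤ (L/2)(‖x* − v^k‖² − ‖x* − v^{k+1}‖²) for all k ≥ 1, with v^{k+1} := v^k − (b_k/L)G(x^k). -/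

import Mathlib

open scoped RealInnerProductSpace

/-- The proximal gradient mapping with step `1/L`: `G(z) = L(z - prox(z - (1/L)∇f z))`. -/
noncomputable def pgmL {E : Type*} [NormedAddCommGroup E] [InnerProductSpace ℝ E]
    (f' : E → E) (prox : E → E) (L : ℝ) (z : E) : E :=
  L • (z - prox (z - (1 / L) • f' z))

/-!
The descent lemma for `f`, the gradient inequality for convex `f` and the variational inequality
characterising `prox` combine into the fundamental prox-grad inequality
`‖G z‖² / (2L) + ⟪G z, u - z⟫ ≤ φ u - φ (z - G z / L)`.
Applied at `z = x^k` with `u = x*` and `u = y^{k-1}`, weighted by `b_k` and `B_{k-1}`, the relation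
`B_k x^k = B_{k-1} y^{k-1} + b_k v^k` collapses the inner products into `-b_k ⟪G x^k, x* - v^k⟫`.
Expanding `(L/2)(‖x* - v^k‖² - ‖x* - v^{k+1}‖²)` gives the same inner product minus
`b_k² ‖G x^k‖² / (2L)`, and the bound on `a_k` is exactly what absorbs the difference.
-/

open Set Filter Topology AffineMap

section Gradient

variable {E : Type*} [NormedAddCommGroup E] [InnerProductSpace ℝ E] [CompleteSpace E]

theorem HasGradientAt.comp_lineMap {f : E → ℝ} {f' x y : E} {t : ℝ}
    (hf : HasGradientAt f f' (lineMap x y t)) :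
    HasDerivAt (f ∘ lineMap x y) ⟪f', y - x⟫ t :=
  hf.hasFDerivAt.comp_hasDerivAt t hasDerivAt_lineMap

theorem ConvexOn.add_inner_le_of_hasGradientAt {f : E → ℝ} {f' x : E}
    (hf : ConvexOn ℝ univ f) (hx : HasGradientAt f f' x) (y : E) :
    f x + ⟪f', y - x⟫ ≤ f y := by
  have hline : HasDerivAt (f ∘ (lineMap x y : ℝ → E)) ⟪f', y - x⟫ 0 :=
    HasGradientAt.comp_lineMap (t := 0) (by simpa using hx)
  have := (hf.comp_affineMap (lineMap x y)).le_slope_of_hasDerivAt (mem_univ 0) (mem_univ 1)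
    zero_lt_one hline
  simp only [slope_def_field, Function.comp_apply, lineMap_apply_one, lineMap_apply_zero,
    sub_zero, div_one] at this
  linarith

theorem le_add_inner_add_sq_of_lipschitz_gradient {f : E → ℝ} {f' : E → E} {L : ℝ}
    (hdiff : ∀ x, HasGradientAt f (f' x) x) (hlip : ∀ x y, ‖f' x - f' y‖ ≤ L * ‖x - y‖)
    (x y : E) : f y ≤ f x + ⟪f' x, y - x⟫ + L / 2 * ‖y - x‖ ^ 2 := by
  set q : ℝ → ℝ := fun t => f (lineMap x y t) - t * ⟪f' x, y - x⟫ - L / 2 * t ^ 2 * ‖y - x‖ ^ 2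
  have hq : ∀ t, HasDerivAt q (⟪f' (lineMap x y t) - f' x, y - x⟫ - L * t * ‖y - x‖ ^ 2) t := by
    intro t
    have hf := HasGradientAt.comp_lineMap (x := x) (y := y) (t := t) (hdiff _)
    have hlin := (hasDerivAt_id t).mul_const ⟪f' x, y - x⟫
    have hquad := ((hasDerivAt_pow 2 t).const_mul (L / 2)).mul_const (‖y - x‖ ^ 2)
    exact ((hf.sub hlin).sub hquad).congr_deriv (by rw [inner_sub_left]; ring)
  have hq_anti : AntitoneOn q (Icc 0 1) := by
    refine antitoneOn_of_deriv_nonpos (convex_Icc 0 1)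
      (fun t _ => (hq t).continuousAt.continuousWithinAt)
      (fun t _ => (hq t).differentiableAt.differentiableWithinAt) fun t ht => ?_
    rw [interior_Icc] at ht
    have hlip_t : ⟪f' (lineMap x y t) - f' x, y - x⟫ ≤ L * t * ‖y - x‖ ^ 2 :=
      calc ⟪f' (lineMap x y t) - f' x, y - x⟫
          ≤ ‖f' (lineMap x y t) - f' x‖ * ‖y - x‖ := real_inner_le_norm _ _
        _ ≤ L * ‖lineMap x y t - x‖ * ‖y - x‖ := by gcongr; exact hlip _ _
        _ = L * t * ‖y - x‖ ^ 2 := by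
          rw [lineMap_apply_module', add_sub_cancel_right, norm_smul, Real.norm_of_nonneg ht.1.le]
          ring
    rw [(hq t).deriv]
    linarith
  have := hq_anti (left_mem_Icc.2 zero_le_one) (right_mem_Icc.2 zero_le_one) zero_le_one
  simp only [q, lineMap_apply_one, lineMap_apply_zero] at this
  linarith

end Gradient

section Prox

variable {E : Type*} [NormedAddCommGroup E] [InnerProductSpace ℝ E]

theorem le_of_forall_mem_Ioc_le_add_mul {a b c : ℝ} (h : ∀ t ∈ Ioc (0 : ℝ) 1, a ≤ b + t * c) :
    a ≤ b := by
  have hlim : Tendsto (fun t : ℝ => b + t * c) (𝓝[>] 0) (𝓝 b) := by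
    have hcont : Continuous fun t : ℝ => b + t * c := by fun_prop
    simpa using (hcont.tendsto 0).mono_left nhdsWithin_le_nhds
  exact ge_of_tendsto hlim (eventually_of_mem (Ioc_mem_nhdsGT one_pos) h)

theorem IsMinOn.le_add_inner_of_convexOn {g : E → ℝ} {c : ℝ} {y p : E}
    (hg : ConvexOn ℝ univ g) (hp : IsMinOn (fun z => g z + c * ‖z - y‖ ^ 2) univ p) (u : E) :
    g p ≤ g u + 2 * c * ⟪p - y, u - p⟫ := by
  refine le_of_forall_mem_Ioc_le_add_mul (c := c * ‖u - p‖ ^ 2) fun t ht => ?_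
  have hmin := hp (mem_univ (p + t • (u - p)))
  have hconv : g (p + t • (u - p)) ≤ (1 - t) * g p + t * g u := by
    rw [show p + t • (u - p) = (1 - t) • p + t • u by module]
    exact hg.2 (mem_univ p) (mem_univ u) (by linarith [ht.2]) ht.1.le (by ring)
  have hexpand : ‖p + t • (u - p) - y‖ ^ 2
      = ‖p - y‖ ^ 2 + 2 * t * ⟪p - y, u - p⟫ + t ^ 2 * ‖u - p‖ ^ 2 := by
    rw [show p + t • (u - p) - y = (p - y) + t • (u - p) by abel, norm_add_sq_real,
      real_inner_smul_right, norm_smul, Real.norm_eq_abs, mul_pow, sq_abs]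
    ring
  simp only [mem_ofPred_eq, hexpand] at hmin
  have : t * g p ≤ t * (g u + 2 * c * ⟪p - y, u - p⟫ + t * (c * ‖u - p‖ ^ 2)) := by
    linarith
  exact le_of_mul_le_mul_left this ht.1

end Prox

section ProxGrad

variable {E : Type*} [NormedAddCommGroup E] [InnerProductSpace ℝ E] [CompleteSpace E]
  {f : E → ℝ} {f' : E → E} {g : E → ℝ} {L : ℝ} {prox : E → E}

theorem prox_grad_inequality (hL : 0 < L) (hdiff : ∀ x, HasGradientAt f (f' x) x)
    (hconv : ConvexOn ℝ univ f) (hlip : ∀ x y, ‖f' x - f' y‖ ≤ L * ‖x - y‖)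
    (hg : ConvexOn ℝ univ g)
    (hprox : ∀ y : E, IsMinOn (fun z => g z + (1 / (2 * (1 / L))) * ‖z - y‖ ^ 2) univ (prox y))
    (z u : E) :
    1 / (2 * L) * ‖pgmL f' prox L z‖ ^ 2 + ⟪pgmL f' prox L z, u - z⟫
      ≤ (f u + g u) - (f (z - (1 / L) • pgmL f' prox L z)
          + g (z - (1 / L) • pgmL f' prox L z)) := by
  set p := prox (z - (1 / L) • f' z)
  have hG : pgmL f' prox L z = L • (z - p) := rfl
  have hp : z - (1 / L) • pgmL f' prox L z = p := by
    rw [hG, smul_smul, one_div, inv_mul_cancel₀ hL.ne', one_smul, sub_sub_cancel]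
  have hf_upper := le_add_inner_add_sq_of_lipschitz_gradient hdiff hlip z p
  have hf_lower := hconv.add_inner_le_of_hasGradientAt (hdiff z) u
  have hg_prox := (hprox (z - (1 / L) • f' z)).le_add_inner_of_convexOn hg u
  have hcoef : 2 * (1 / (2 * (1 / L))) = L := by field_simp
  have hlin : ⟪f' z, p - z⟫ = -⟪f' z, z - p⟫ := by rw [← inner_neg_right, neg_sub]
  have hquad : 2 * (1 / (2 * (1 / L))) * ⟪p - (z - (1 / L) • f' z), u - p⟫
      = ⟪f' z, u - z⟫ + ⟪f' z, z - p⟫ - L * ⟪z - p, u - z⟫ - L * ‖z - p‖ ^ 2 := by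
    rw [hcoef, show p - (z - (1 / L) • f' z) = (1 / L) • f' z - (z - p) by abel,
      show u - p = (u - z) + (z - p) by abel]
    rw [inner_sub_left, inner_add_right, inner_add_right, real_inner_smul_left,
      real_inner_smul_left, real_inner_self_eq_norm_sq]
    field_simp
    ring
  have hlhs : 1 / (2 * L) * ‖L • (z - p)‖ ^ 2 + ⟪L • (z - p), u - z⟫
      = L / 2 * ‖z - p‖ ^ 2 + L * ⟪z - p, u - z⟫ := by
    rw [norm_smul, Real.norm_of_nonneg hL.le, real_inner_smul_left]
    field_simp
  rw [hp, hG, hlhs]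
  rw [hlin, norm_sub_rev] at hf_upper
  linarith

end ProxGrad

section Potential

variable {E : Type*} [NormedAddCommGroup E] [InnerProductSpace ℝ E]

theorem weighted_gap_step_le {φ : E → ℝ} {G z y₀ y₁ v w : E} {s B₀ B₁ : ℝ}
    (hB₀ : 0 ≤ B₀) (hB : B₀ ≤ B₁) (hz : B₁ • z = B₀ • y₀ + (B₁ - B₀) • v)
    (hkey : ∀ u, s + ⟪G, u - z⟫ ≤ φ u - φ y₁) :
    B₁ * (φ y₁ - φ w) - B₀ * (φ y₀ - φ w) + B₁ * s ≤ -((B₁ - B₀) * ⟪G, w - v⟫) := by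
  have h₀ := mul_le_mul_of_nonneg_left (hkey y₀) hB₀
  have h₁ := mul_le_mul_of_nonneg_left (hkey w) (sub_nonneg.2 hB)
  have hvec : B₀ • (y₀ - z) + (B₁ - B₀) • (w - z) = (B₁ - B₀) • (w - v) := by
    linear_combination (norm := module) -hz
  have hinner : B₀ * ⟪G, y₀ - z⟫ + (B₁ - B₀) * ⟪G, w - z⟫ = (B₁ - B₀) * ⟪G, w - v⟫ := by
    rw [← real_inner_smul_right, ← real_inner_smul_right, ← inner_add_right, hvec,
      real_inner_smul_right]
  linarith

theorem half_mul_sq_norm_sub_sq_norm_add_smul {L : ℝ} (hL : L ≠ 0) (b : ℝ) (w G : E) :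
    L / 2 * (‖w‖ ^ 2 - ‖w + (b / L) • G‖ ^ 2) = -(b * ⟪G, w⟫) - b ^ 2 / (2 * L) * ‖G‖ ^ 2 := by
  rw [norm_add_sq_real, real_inner_smul_right, norm_smul, Real.norm_eq_abs, mul_pow, sq_abs,
    real_inner_comm]
  field_simp
  ring

end Potential

theorem potential_decrease_accelerated_prox_grad_general
    {E : Type*} [NormedAddCommGroup E] [InnerProductSpace ℝ E] [FiniteDimensional ℝ E]
    (f : E → ℝ) (f' : E → E) (g : E → ℝ) (L : ℝ) (hL : 0 < L)
    (hdiff : ∀ x, HasGradientAt f (f' x) x)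
    (hconv : ConvexOn ℝ Set.univ f)
    (hlip : ∀ x y, ‖f' x - f' y‖ ≤ L * ‖x - y‖)
    (hg : ConvexOn ℝ Set.univ g)
    (prox : E → E)
    (hprox : ∀ y : E, IsMinOn
      (fun z => g z + (1 / (2 * (1 / L))) * ‖z - y‖ ^ 2) Set.univ (prox y))
    (xstar : E)
    (B b a : ℕ → ℝ)
    (hBpos : ∀ k, 0 < B k) (hBmono : StrictMono B)
    (hb : ∀ k, b (k + 1) = B (k + 1) - B k)
    (ha : ∀ k, 1 ≤ k → a k ≤ (B k - (b k) ^ 2) / (2 * L))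
    (x v y : ℕ → E)
    (hy : ∀ k, y k = x k - (1 / L) • pgmL f' prox L (x k))
    (hv : ∀ k, v (k + 1) = v k - (b k / L) • pgmL f' prox L (x k))
    (hxk : ∀ k, x (k + 1) =
      (B k / B (k + 1)) • y k + (b (k + 1) / B (k + 1)) • v (k + 1)) :
    ∀ k : ℕ, 1 ≤ k →
      ((∑ i ∈ Finset.range (k + 1), a i * ‖pgmL f' prox L (x i)‖ ^ 2)
            + B k * ((f (y k) + g (y k)) - (f xstar + g xstar)))
        - ((∑ i ∈ Finset.range k, a i * ‖pgmL f' prox L (x i)‖ ^ 2)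
            + B (k - 1) * ((f (y (k - 1)) + g (y (k - 1))) - (f xstar + g xstar)))
        ≤ (L / 2) * (‖xstar - v k‖ ^ 2 - ‖xstar - v (k + 1)‖ ^ 2) := by
  intro k hk
  obtain ⟨m, rfl⟩ := Nat.exists_eq_add_of_le' hk
  rw [Finset.sum_range_succ, Nat.add_sub_cancel]
  set G := pgmL f' prox L (x (m + 1))
  have hcomb : B (m + 1) • x (m + 1) = B m • y m + (B (m + 1) - B m) • v (m + 1) := by
    rw [hxk m, ← hb m, smul_add, smul_smul, smul_smul, mul_div_cancel₀ _ (hBpos _).ne',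
      mul_div_cancel₀ _ (hBpos _).ne']
  have hgap := weighted_gap_step_le (φ := fun u => f u + g u) (G := G) (y₁ := y (m + 1))
    (w := xstar) (s := 1 / (2 * L) * ‖G‖ ^ 2) (hBpos m).le (hBmono (Nat.lt_add_one m)).le hcomb
    fun u => by rw [hy]; exact prox_grad_inequality hL hdiff hconv hlip hg hprox _ u
  have hv_next : xstar - v (m + 1 + 1) = (xstar - v (m + 1)) + (b (m + 1) / L) • G := by
    rw [hv]; abel
  have ha_G := mul_le_mul_of_nonneg_right (ha (m + 1) le_add_self) (sq_nonneg ‖G‖)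
  rw [hv_next, half_mul_sq_norm_sub_sq_norm_add_smul hL.ne', hb]
  rw [hb] at ha_G
  linear_combination hgap + ha_G

/-- **Potential decrease for the accelerated proximal gradient scheme.** Under the scheme
`y^k = x^k - (1/L)G(x^k)`, `v^{k+1} = v^k - (b_k/L)G(x^k)`,
`x^{k+1} = (B_k/B_{k+1})y^k + (b_{k+1}/B_{k+1})v^{k+1}`, if `a_k ≤ (B_k - b_k²)/(2L)` for `k ≥ 1`,
the potential `C_k = Σ_{i≤k} a_i‖G(x^i)‖² + B_k(φ(y^k) - φ(x*))` satisfies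
`C_k - C_{k-1} ≤ (L/2)(‖x* - v^k‖² - ‖x* - v^{k+1}‖²)` for `k ≥ 1`. -/
theorem potential_decrease_accelerated_prox_grad
    {E : Type*} [NormedAddCommGroup E] [InnerProductSpace ℝ E] [FiniteDimensional ℝ E]
    (f : E → ℝ) (f' : E → E) (g : E → ℝ) (L : ℝ) (hL : 0 < L)
    (hdiff : ∀ x, HasGradientAt f (f' x) x)
    (hconv : ConvexOn ℝ Set.univ f)
    (hlip : ∀ x y, ‖f' x - f' y‖ ≤ L * ‖x - y‖)
    (hg : ConvexOn ℝ Set.univ g)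
    (prox : E → E)
    (hprox : ∀ y : E, IsMinOn
      (fun z => g z + (1 / (2 * (1 / L))) * ‖z - y‖ ^ 2) Set.univ (prox y))
    (xstar : E) (hmin : IsMinOn (fun z => f z + g z) Set.univ xstar)
    (B b a : ℕ → ℝ)
    (hBpos : ∀ k, 0 < B k) (hBmono : StrictMono B)
    (hb0 : b 0 = B 0) (hb : ∀ k, b (k + 1) = B (k + 1) - B k)
    (ha0 : ∀ k, 0 ≤ a k) (ha : ∀ k, 1 ≤ k → a k ≤ (B k - (b k) ^ 2) / (2 * L))
    (x v y : ℕ → E) (hx0 : x 0 = v 0)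
    (hy : ∀ k, y k = x k - (1 / L) • pgmL f' prox L (x k))
    (hv : ∀ k, v (k + 1) = v k - (b k / L) • pgmL f' prox L (x k))
    (hxk : ∀ k, x (k + 1) =
      (B k / B (k + 1)) • y k + (b (k + 1) / B (k + 1)) • v (k + 1)) :
    ∀ k : ℕ, 1 ≤ k →
      ((∑ i ∈ Finset.range (k + 1), a i * ‖pgmL f' prox L (x i)‖ ^ 2)
            + B k * ((f (y k) + g (y k)) - (f xstar + g xstar)))
        - ((∑ i ∈ Finset.range k, a i * ‖pgmL f' prox L (x i)‖ ^ 2)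
            + B (k - 1) * ((f (y (k - 1)) + g (y (k - 1))) - (f xstar + g xstar)))
        ≤ (L / 2) * (‖xstar - v k‖ ^ 2 - ‖xstar - v (k + 1)‖ ^ 2) :=
  potential_decrease_accelerated_prox_grad_general f f' g L hL hdiff hconv hlip hg prox hprox xstar
    B b a hBpos hBmono hb ha x v y hy hv hxk
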